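/- Let v, v_* ∈ ℝ³ and let σ ∈ 𝕊² be a unit vector with (v − v_*)·σ ≥ 0. Then for all κ, ι ∈ [0,1], μ(v)² μ(v_*)² ≤ μ(v(κ)) μ(v_*(ι)) ≤ μ(v)^{1/4} μ(v_*)^{1/4}. -/

import Mathlib

open MeasureTheory
open scoped ENNReal

noncomputable section

/-- The velocity space `ℝ³`. -/
abbrev R3 : Type := EuclideanSpace ℝ (Fin 3)

/-- The standard Maxwellian `μ(v) = (2π)^{−3/2} e^{−‖v‖²/2}` on `ℝ³`. -/
def maxw (v : R3) : ℝ := (2 * Real.pi) ^ (-(3 : ℝ) / 2) * Real.exp (-‖v‖ ^ 2 / 2)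

private lemma scalarA (M U t s κ ι : ℝ) (hM : 0 ≤ M) (ht : 0 ≤ t) (htU : t ≤ U/2)
    (hs : s^2 ≤ M*t) (hκ0 : 0 ≤ κ) (hκ1 : κ ≤ 1) (hι0 : 0 ≤ ι) (hι1 : ι ≤ 1) :
    (κ^2+ι^2)*t + 2*(κ-ι)*s - (κ+ι)*t ≤ 2*M + U/2 := by
  have h2s : 2*s ≤ M + t := by nlinarith [sq_nonneg (M - t)]
  have h2s' : -(M + t) ≤ 2*s := by nlinarith [sq_nonneg (M - t)]
  nlinarith [mul_nonneg (mul_nonneg hκ0 (sub_nonneg.2 hκ1)) ht,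
    mul_nonneg (mul_nonneg hι0 (sub_nonneg.2 hι1)) ht]

private lemma scalarB (M U t s κ ι : ℝ) (hM : 0 ≤ M) (ht : 0 ≤ t) (htU : t ≤ U/2)
    (hs : s^2 ≤ M*t) (hκ0 : 0 ≤ κ) (hκ1 : κ ≤ 1) (hι0 : 0 ≤ ι) (hι1 : ι ≤ 1) :
    0 ≤ 3*(2*M + U/2) + 4*(κ^2+ι^2)*t - 4*(κ+ι)*t + 8*(κ-ι)*s := by
  rcases eq_or_lt_of_le ht with h0 | h0
  · have : s = 0 := by nlinarith
    subst this
    nlinarith [sq_nonneg (2*κ-1), sq_nonneg (2*ι-1)]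
  · have key : 0 ≤ t * (6*M + t*(1+(2*κ-1)^2+(2*ι-1)^2) + 4*((2*κ-1)-(2*ι-1))*s) := by
      nlinarith [sq_nonneg (3*s + ((2*κ-1)-(2*ι-1))*t), sq_nonneg (((2*κ-1)+(2*ι-1))*t),
        mul_nonneg (mul_nonneg (sub_nonneg.2 hκ1) hι0) (mul_pos h0 h0).le,
        mul_nonneg (mul_nonneg hκ0 (sub_nonneg.2 hι1)) (mul_pos h0 h0).le,
        sq_nonneg t, hs, sq_nonneg s]
    have H : 0 ≤ 6*M + t*(1+(2*κ-1)^2+(2*ι-1)^2) + 4*((2*κ-1)-(2*ι-1))*s :=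
      nonneg_of_mul_nonneg_right (by linarith [key]) h0
    nlinarith [H]

set_option maxHeartbeats 1000000 in
/-- If `(v − v_*)·σ ≥ 0` for the unit vector `σ`, then for all `κ, ι ∈ [0,1]` the interpolated
velocities `v(κ) = κv' + (1 − κ)v`, `v_*(ι) = ιv_*' + (1 − ι)v_*` satisfy
`μ(v)²μ(v_*)² ≤ μ(v(κ))μ(v_*(ι)) ≤ μ(v)^{1/4}μ(v_*)^{1/4}`. -/
theorem statement3 (v vs σ : R3) (hσ : ‖σ‖ = 1)
    (hsign : 0 ≤ (inner ℝ (v - vs) σ : ℝ))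
    (κ ι : ℝ) (hκ : κ ∈ Set.Icc (0:ℝ) 1) (hι : ι ∈ Set.Icc (0:ℝ) 1) :
    let v' : R3 := (2⁻¹ : ℝ) • (v + vs) + (‖v - vs‖ / 2) • σ
    let vs' : R3 := (2⁻¹ : ℝ) • (v + vs) - (‖v - vs‖ / 2) • σ
    let vκ : R3 := κ • v' + (1 - κ) • v
    let vι : R3 := ι • vs' + (1 - ι) • vs
    maxw v ^ 2 * maxw vs ^ 2 ≤ maxw vκ * maxw vι ∧
    maxw vκ * maxw vι ≤ maxw v ^ ((1 : ℝ) / 4) * maxw vs ^ ((1 : ℝ) / 4) := by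
  intro v' vs' vκ vι
  obtain ⟨hκ0, hκ1⟩ := hκ
  obtain ⟨hι0, hι1⟩ := hι
  have hsmul : ∀ (c:ℝ) (x:R3), ‖c • x‖^2 = c^2 * ‖x‖^2 := fun c x => by
    rw [norm_smul, Real.norm_eq_abs, mul_pow, sq_abs]
  set u : R3 := v - vs with hu
  set w : R3 := (‖u‖/2) • σ - (2⁻¹ : ℝ) • u with hw
  set m : R3 := (2⁻¹ : ℝ) • (v + vs) with hm
  have hσσ : (inner ℝ σ σ : ℝ) = 1 := by
    rw [real_inner_self_eq_norm_sq, hσ]; norm_num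
  have ht : ‖w‖^2 = ‖u‖^2/2 - (‖u‖/2) * inner ℝ u σ := by
    rw [← real_inner_self_eq_norm_sq, hw]
    simp only [inner_sub_sub_self, real_inner_smul_left, real_inner_smul_right, hσσ,
      real_inner_self_eq_norm_sq, real_inner_comm σ u, hsmul, hσ]
    ring
  have huw : (inner ℝ u w : ℝ) = -‖w‖^2 := by
    rw [ht, hw]
    simp only [inner_sub_right, real_inner_smul_right, real_inner_self_eq_norm_sq]
    ring
  have hvm : v = m + (2⁻¹:ℝ) • u := by rw [hm, hu]; module
  have hvsm : vs = m - (2⁻¹:ℝ) • u := by rw [hm, hu]; module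
  have hp : (inner ℝ v w : ℝ) = inner ℝ m w - ‖w‖^2/2 := by
    conv_lhs => rw [hvm]
    simp only [inner_add_left, real_inner_smul_left, huw]
    ring
  have hq : (inner ℝ vs w : ℝ) = inner ℝ m w + ‖w‖^2/2 := by
    conv_lhs => rw [hvsm]
    simp only [inner_sub_left, real_inner_smul_left, huw]
    ring
  have hS : ‖v‖^2 + ‖vs‖^2 = 2*‖m‖^2 + ‖u‖^2/2 := by
    conv_lhs => rw [hvm, hvsm]
    rw [norm_add_sq_real, norm_sub_sq_real]; simp only [hsmul]
    ring
  have hCS : (inner ℝ m w : ℝ)^2 ≤ ‖m‖^2 * ‖w‖^2 := by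
    have h := real_inner_mul_inner_self_le m w
    rw [real_inner_self_eq_norm_sq, real_inner_self_eq_norm_sq] at h
    nlinarith [h]
  have htU : ‖w‖^2 ≤ ‖u‖^2/2 := by
    have h1 : 0 ≤ (‖u‖/2) * inner ℝ u σ :=
      mul_nonneg (by positivity) hsign
    linarith [ht]
  -- identities for the interpolated velocities
  have hvκ : vκ = v + κ • w := by
    show κ • ((2⁻¹ : ℝ) • (v + vs) + (‖v - vs‖ / 2) • σ) + (1 - κ) • v = v + κ • w
    rw [hw, hu]
    module
  have hvι : vι = vs - ι • w := by
    show ι • ((2⁻¹ : ℝ) • (v + vs) - (‖v - vs‖ / 2) • σ) + (1 - ι) • vs = vs - ι • w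
    rw [hw, hu]
    module
  have hTκ : ‖vκ‖^2 = ‖v‖^2 + 2*κ*(inner ℝ v w : ℝ) + κ^2*‖w‖^2 := by
    rw [hvκ, norm_add_sq_real, real_inner_smul_right]; simp only [hsmul]; ring
  have hTι : ‖vι‖^2 = ‖vs‖^2 - 2*ι*(inner ℝ vs w : ℝ) + ι^2*‖w‖^2 := by
    rw [hvι, norm_sub_sq_real, real_inner_smul_right]; simp only [hsmul]; ring
  have hT : ‖vκ‖^2 + ‖vι‖^2 = ‖v‖^2 + ‖vs‖^2
      + (κ^2+ι^2)*‖w‖^2 + 2*(κ-ι)*(inner ℝ m w : ℝ) - (κ+ι)*‖w‖^2 := by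
    rw [hTκ, hTι, hp, hq]; ring
  have hM : (0:ℝ) ≤ ‖m‖^2 := by positivity
  have htnn : (0:ℝ) ≤ ‖w‖^2 := by positivity
  -- the two key norm inequalities
  have hT2S : ‖vκ‖^2 + ‖vι‖^2 ≤ 2*(‖v‖^2 + ‖vs‖^2) := by
    have := scalarA (‖m‖^2) (‖u‖^2) (‖w‖^2) (inner ℝ m w) κ ι hM htnn htU hCS hκ0 hκ1 hι0 hι1
    linarith [hT, hS]
  have hS4T : ‖v‖^2 + ‖vs‖^2 ≤ 4*(‖vκ‖^2 + ‖vι‖^2) := by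
    have := scalarB (‖m‖^2) (‖u‖^2) (‖w‖^2) (inner ℝ m w) κ ι hM htnn htU hCS hκ0 hκ1 hι0 hι1
    linarith [hT, hS]
  -- exponential estimates
  set C : ℝ := (2 * Real.pi) ^ (-(3:ℝ)/2) with hC
  have hC0 : 0 < C := Real.rpow_pos_of_pos (by positivity) _
  have hC1 : C ≤ 1 :=
    Real.rpow_le_one_of_one_le_of_nonpos (by nlinarith [Real.pi_gt_three]) (by norm_num)
  have eexp : ∀ a b : ℝ, Real.exp a * Real.exp b = Real.exp (a+b) :=
    fun a b => (Real.exp_add a b).symm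
  have e1 : maxw v ^ 2 * maxw vs ^ 2 = C^4 * Real.exp (-(‖v‖^2 + ‖vs‖^2)) := by
    simp only [maxw, ← hC, mul_pow, pow_two (Real.exp _), eexp]
    rw [show C^2*Real.exp (-‖v‖^2/2 + -‖v‖^2/2) * (C^2*Real.exp (-‖vs‖^2/2 + -‖vs‖^2/2))
        = C^4 * (Real.exp (-‖v‖^2/2 + -‖v‖^2/2) * Real.exp (-‖vs‖^2/2 + -‖vs‖^2/2)) by ring,
      eexp]
    congr 1
    ring
  have e2 : maxw vκ * maxw vι = C^2 * Real.exp (-(‖vκ‖^2 + ‖vι‖^2)/2) := by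
    simp only [maxw, ← hC]
    rw [show C*Real.exp (-‖vκ‖^2/2) * (C*Real.exp (-‖vι‖^2/2))
        = C^2 * (Real.exp (-‖vκ‖^2/2) * Real.exp (-‖vι‖^2/2)) by ring, eexp]
    congr 1
    ring
  have e3 : maxw v ^ ((1:ℝ)/4) * maxw vs ^ ((1:ℝ)/4)
      = C^((1:ℝ)/2) * Real.exp (-(‖v‖^2 + ‖vs‖^2)/8) := by
    simp only [maxw, ← hC]
    rw [Real.mul_rpow hC0.le (Real.exp_pos _).le, Real.mul_rpow hC0.le (Real.exp_pos _).le,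
      ← Real.exp_mul, ← Real.exp_mul,
      show C^((1:ℝ)/4) * Real.exp (-‖v‖^2/2*(1/4)) * (C^((1:ℝ)/4) * Real.exp (-‖vs‖^2/2*(1/4)))
        = C^((1:ℝ)/4) * C^((1:ℝ)/4)
          * (Real.exp (-‖v‖^2/2*(1/4)) * Real.exp (-‖vs‖^2/2*(1/4))) by ring,
      ← Real.rpow_add hC0, eexp, show (1:ℝ)/4+(1:ℝ)/4 = 1/2 by norm_num]
    congr 1
    ring
  constructor
  · rw [e1, e2]
    have hCpow : C^4 ≤ C^2 := pow_le_pow_of_le_one hC0.le hC1 (by norm_num)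
    have hexp : Real.exp (-(‖v‖^2 + ‖vs‖^2)) ≤ Real.exp (-(‖vκ‖^2 + ‖vι‖^2)/2) :=
      Real.exp_le_exp.mpr (by linarith)
    exact mul_le_mul hCpow hexp (Real.exp_pos _).le (by positivity)
  · rw [e2, e3]
    have hCpow : C^2 ≤ C^((1:ℝ)/2) := by
      have h := Real.rpow_le_rpow_of_exponent_ge hC0 hC1 (by norm_num : (1:ℝ)/2 ≤ 2)
      rwa [show ((2:ℝ)) = ((2:ℕ):ℝ) by norm_num, Real.rpow_natCast] at h
    have hexp : Real.exp (-(‖vκ‖^2 + ‖vι‖^2)/2) ≤ Real.exp (-(‖v‖^2 + ‖vs‖^2)/8) :=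
      Real.exp_le_exp.mpr (by linarith)
    exact mul_le_mul hCpow hexp (Real.exp_pos _).le (Real.rpow_nonneg hC0.le _)

end
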